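/- arXiv:1112.1244 — 8 statements merged into one kernel-verified Lean document; each statement's English description precedes it below -/
import Mathlib

section
/- Let C be a code in H(m,q) with minimum distance δ ≥ 3. Suppose there exist α ∈ C and an automorphism y of H(m,q) such that y(Γ1(C)) = Γ1(C) and y(α) ∉ C. Then for every vertex ν with d(α,ν) = 1, there exists a unique vertex π ∈ Q^m such that d(α,π) = 2, y(π) ∈ C, and d(ν,π) = 1. -/
open Set

variable {m : ℕ} {Q : Type*}

/-- An automorphism of the Hamming graph `H(m,q)`: a bijection of the vertex
set `Q^m` (given as an `Equiv`) preserving Hamming distance. -/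
def IsHammingAut [DecidableEq Q] (f : (Fin m → Q) ≃ (Fin m → Q)) : Prop :=
  ∀ a b : Fin m → Q, hammingDist (f a) (f b) = hammingDist a b

/-- The set of neighbours `Γ₁(C)` of a code `C` in `H(m,q)`. -/
def Nbrs [DecidableEq Q] (C : Set (Fin m → Q)) : Set (Fin m → Q) :=
  {ν | ν ∉ C ∧ ∃ α ∈ C, hammingDist ν α = 1}

/-- The code `C` has minimum distance `δ`. -/
def IsMinDist [DecidableEq Q] (C : Set (Fin m → Q)) (δ : ℕ) : Prop :=
  (∀ a ∈ C, ∀ b ∈ C, a ≠ b → δ ≤ hammingDist a b) ∧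
  ∃ a ∈ C, ∃ b ∈ C, a ≠ b ∧ hammingDist a b = δ

/-- The neighbours `Γ₁(β)` of a single vertex `β`. -/
def Sph [DecidableEq Q] (β : Fin m → Q) : Set (Fin m → Q) :=
  {ν | hammingDist β ν = 1}

/-- The set `Pre(α, y)` of pre-codewords of `α` with respect to `y`. -/
def Pre [DecidableEq Q] (C : Set (Fin m → Q)) (α : Fin m → Q)
    (y : (Fin m → Q) ≃ (Fin m → Q)) : Set (Fin m → Q) :=
  {π | hammingDist α π = 2 ∧ y π ∈ C}

/-- The set `C(π)` of codewords `β` with `d(β,π) = 2` admitting a common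
neighbour `ν` with `π`. -/
def CSet [DecidableEq Q] (C : Set (Fin m → Q)) (π : Fin m → Q) : Set (Fin m → Q) :=
  {β | β ∈ C ∧ hammingDist β π = 2 ∧ ∃ ν, hammingDist β ν = 1 ∧ hammingDist ν π = 1}

/-- if `y` stabilises `Γ₁(C)` but moves the codeword `α` outside
`C`, then every neighbour `ν` of `α` is adjacent to a unique vertex `π` at
distance 2 from `α` with `y π ∈ C`. -/
theorem stmt_4 [DecidableEq Q] (C : Set (Fin m → Q)) (δ : ℕ)
    (hmin : IsMinDist C δ) (hδ : 3 ≤ δ)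
    (α : Fin m → Q) (hα : α ∈ C)
    (y : (Fin m → Q) ≃ (Fin m → Q)) (hy : IsHammingAut y)
    (hyN : y '' Nbrs C = Nbrs C) (hyα : y α ∉ C) :
    ∀ ν : Fin m → Q, hammingDist α ν = 1 →
      ∃! π : Fin m → Q,
        hammingDist α π = 2 ∧ y π ∈ C ∧ hammingDist ν π = 1 := by
  intro ν hν
  have hνC : ν ∉ C := by
    intro h
    have hne : α ≠ ν := by
      intro e; rw [e, hammingDist_self] at hν; omega
    have := hmin.1 α hα ν h hne
    omega
  have hνN : ν ∈ Nbrs C := ⟨hνC, α, hα, by rwa [hammingDist_comm]⟩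
  have hyνN : y ν ∈ Nbrs C := by rw [← hyN]; exact ⟨ν, hνN, rfl⟩
  obtain ⟨hyνC, β, hβ, hd⟩ := hyνN
  set π := y.symm β with hπdef
  have hyπ : y π = β := y.apply_symm_apply β
  have hyπC : y π ∈ C := hyπ ▸ hβ
  have hdνπ : hammingDist ν π = 1 := by
    have h := hy ν π
    rw [hyπ, hd] at h; exact h.symm
  have hπα : π ≠ α := by
    intro e
    rw [e] at hyπC; exact hyα hyπC
  have hπC : π ∉ C := by
    intro h
    have := hmin.1 α hα π h (Ne.symm hπα)
    have hle : hammingDist α π ≤ 2 := by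
      have := hammingDist_triangle α ν π
      omega
    omega
  have hdαπ : hammingDist α π = 2 := by
    have hle : hammingDist α π ≤ hammingDist α ν + hammingDist ν π :=
      hammingDist_triangle α ν π
    have hne : hammingDist α π ≠ 0 := by
      intro h
      exact hπα (hammingDist_eq_zero.mp h).symm
    have hne1 : hammingDist α π ≠ 1 := by
      intro h
      have hπN : π ∈ Nbrs C := ⟨hπC, α, hα, by rwa [hammingDist_comm]⟩
      have : y π ∈ Nbrs C := by rw [← hyN]; exact ⟨π, hπN, rfl⟩
      exact this.1 hyπC
    omega
  refine ⟨π, ⟨hdαπ, hyπC, hdνπ⟩, ?_⟩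
  rintro π' ⟨h1, h2, h3⟩
  have hdist : hammingDist (y π') (y π) ≤ 2 := by
    rw [hy]
    have := hammingDist_triangle π' ν π
    rw [hammingDist_comm π' ν] at this
    omega
  by_contra hne
  have : y π' ≠ y π := fun e => hne (y.injective e)
  have := hmin.1 (y π') h2 (y π) hyπC this
  omega
end

section
/- Let C be a code in H(m,q) with minimum distance δ ≥ 3, let α ∈ C, and let y be an automorphism of H(m,q) with y(Γ1(C)) = Γ1(C) and y(α) ∉ C. Then the collection of sets {Γ1(α) ∩ Γ1(π) : π ∈ Pre(α,y)} forms a partition of Γ1(α) = {ν : d(α,ν) = 1}: these sets are pairwise disjoint, nonempty, and their union is Γ1(α). -/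
open Set

variable {m : ℕ} {Q : Type*}

private lemma update_dist {m : ℕ} {Q : Type*} [DecidableEq Q] (a b : Fin m → Q) (i : Fin m)
    (h : a i ≠ b i) :
    hammingDist a (Function.update a i (b i)) = 1 ∧
    hammingDist (Function.update a i (b i)) b = hammingDist a b - 1 := by
  constructor
  · have h1 : (Finset.filter (fun j => a j ≠ Function.update a i (b i) j) Finset.univ) = {i} := by
      ext j
      rcases eq_or_ne j i with rfl | hji
      · simp [Function.update_self, h]
      · simp [Function.update_of_ne hji, hji]
    rw [hammingDist]
    simp only [h1, Finset.card_singleton]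
  · have h2 : (Finset.filter (fun j => Function.update a i (b i) j ≠ b j) Finset.univ)
        = (Finset.filter (fun j => a j ≠ b j) Finset.univ).erase i := by
      ext j
      rcases eq_or_ne j i with rfl | hji
      · simp [Function.update_self]
      · simp [Function.update_of_ne hji, hji]
    have hi : i ∈ Finset.filter (fun j => a j ≠ b j) Finset.univ := by simp [h]
    rw [hammingDist, hammingDist]
    simp only [h2, Finset.card_erase_of_mem hi]

/-- the sets `Γ₁(α) ∩ Γ₁(π)`, for `π ∈ Pre(α,y)`, partition
`Γ₁(α)`: they are pairwise disjoint, nonempty, and cover `Γ₁(α)`. -/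
theorem stmt_5 [DecidableEq Q] (C : Set (Fin m → Q)) (δ : ℕ)
    (hmin : IsMinDist C δ) (hδ : 3 ≤ δ)
    (α : Fin m → Q) (hα : α ∈ C)
    (y : (Fin m → Q) ≃ (Fin m → Q)) (hy : IsHammingAut y)
    (hyN : y '' Nbrs C = Nbrs C) (hyα : y α ∉ C) :
    (∀ π1 ∈ Pre C α y, ∀ π2 ∈ Pre C α y, π1 ≠ π2 →
        (Sph α ∩ Sph π1) ∩ (Sph α ∩ Sph π2) = ∅) ∧
    (∀ π ∈ Pre C α y, (Sph α ∩ Sph π).Nonempty) ∧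
    (⋃ π ∈ Pre C α y, Sph α ∩ Sph π) = Sph α := by
  obtain ⟨hlb, -⟩ := hmin
  have hSph : ∀ ν : Fin m → Q, hammingDist α ν = 1 → ν ∈ Nbrs C := by
    intro ν hν
    refine ⟨?_, α, hα, by rw [hammingDist_comm]; exact hν⟩
    intro hνC
    have hne : ν ≠ α := by
      intro h; subst h; simp [hammingDist_self] at hν
    have := hlb ν hνC α hα hne
    rw [hammingDist_comm] at this
    omega
  have hyNmem : ∀ ν ∈ Nbrs C, y ν ∈ Nbrs C := by
    intro ν hν; rw [← hyN]; exact ⟨ν, hν, rfl⟩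
  refine ⟨?_, ?_, ?_⟩
  · intro π1 h1 π2 h2 hne
    ext ν
    simp only [Sph, Set.mem_inter_iff, Set.mem_setOf_eq, Set.mem_empty_iff_false, iff_false]
    rintro ⟨⟨-, hν1⟩, -, hν2⟩
    have h12 : hammingDist π1 π2 ≤ 2 := by
      have t := hammingDist_triangle π1 ν π2
      rw [hammingDist_comm π2 ν] at hν2
      omega
    have hneY : y π1 ≠ y π2 := fun h => hne (y.injective h)
    have := hlb (y π1) h1.2 (y π2) h2.2 hneY
    rw [hy π1 π2] at this
    omega
  · rintro π ⟨hd, -⟩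
    have hne : α ≠ π := by
      intro h; subst h; simp [hammingDist_self] at hd
    obtain ⟨i, hi⟩ := Function.ne_iff.mp hne
    obtain ⟨ha, hb⟩ := update_dist α π i hi
    refine ⟨Function.update α i (π i), ha, ?_⟩
    show hammingDist π (Function.update α i (π i)) = 1
    rw [hammingDist_comm]; omega
  · ext ν
    simp only [Sph, Set.mem_iUnion, Set.mem_inter_iff, Set.mem_setOf_eq, exists_prop]
    constructor
    · rintro ⟨π, -, hs, -⟩; exact hs
    · intro hν
      have hνN := hSph ν hν
      obtain ⟨hyνC, c, hcC, hcd⟩ := hyNmem ν hνN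
      set π := y.symm c with hπ
      have hyπ : y π = c := y.apply_symm_apply c
      have hνπ : hammingDist ν π = 1 := by
        rw [← hy ν π, hyπ]; exact hcd
      have hπα2 : hammingDist α π = 2 := by
        have t := hammingDist_triangle α ν π
        have h0 : α ≠ π := by
          intro h; rw [← h] at hyπ; exact hyα (hyπ ▸ hcC)
        have h1 : hammingDist α π ≠ 1 := by
          intro h
          have := hyNmem π (hSph π h)
          exact this.1 (hyπ ▸ hcC)
        have hpos := hammingDist_pos.mpr h0
        omega
      exact ⟨π, ⟨hπα2, hyπ ▸ hcC⟩, hν, by rw [hammingDist_comm]; exact hνπ⟩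
end

section
/- Let C be a code in H(m,q) with minimum distance δ ≥ 3, let α ∈ C, and let y be an automorphism of H(m,q) with y(Γ1(C)) = Γ1(C) and y(α) ∉ C. Then the set Pre(α,y) has exactly m(q-1)/2 elements; in particular m(q-1) is even. -/
open Set

variable {m : ℕ} {Q : Type*}

/-! The vertex `w = y α` lies outside `C ∪ Γ₁(C)`, because `α` does and `y` fixes `Γ₁(C)`. Every
neighbour of `w` is the image under `y` of a neighbour of `α`, which lies in `Γ₁(C)` as `δ ≥ 3`. So
each of the `m(q-1)` neighbours of `w` is adjacent to a codeword at distance `2` from `w`, unique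
since `δ ≥ 3`, and each such codeword shares exactly two neighbours with `w`. Hence
`m(q-1) = 2 · #{β ∈ C | d(w, β) = 2}`, and `y⁻¹` maps this set of codewords onto `Pre(α, y)`. -/

open Finset Function

section HammingGraph

variable {ι α : Type*} [Fintype ι] [DecidableEq ι] [DecidableEq α]

lemma hammingDist_update_self (x : ι → α) {k : ι} {a : α} (ha : a ≠ x k) :
    hammingDist x (update x k a) = 1 := by
  rw [hammingDist, card_eq_one]
  refine ⟨k, ext fun i => ?_⟩
  by_cases hi : i = k
  · subst hi
    simp [ha.symm]
  · simp [hi]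

lemma hammingDist_eq_one_iff {x y : ι → α} :
    hammingDist x y = 1 ↔ ∃ k a, a ≠ x k ∧ update x k a = y := by
  constructor
  · intro h
    obtain ⟨k, hk⟩ := card_eq_one.1 h
    have hdiff (i : ι) : x i ≠ y i ↔ i = k := by simpa using Finset.ext_iff.1 hk i
    refine ⟨k, y k, fun h => (hdiff k).2 rfl h.symm, funext fun i => ?_⟩
    by_cases hi : i = k
    · subst hi
      simp
    · rw [update_of_ne hi]
      exact not_not.1 fun hne => hi ((hdiff i).1 hne)
  · rintro ⟨k, a, ha, rfl⟩
    exact hammingDist_update_self x ha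

lemma hammingDist_update_add_one (z x : ι → α) {k : ι} (hk : z k ≠ x k) :
    hammingDist z (update x k (z k)) + 1 = hammingDist z x := by
  have hsupp : ({i | z i ≠ update x k (z k) i} : Finset ι) =
      ({i | z i ≠ x i} : Finset ι).erase k := by
    ext i
    by_cases hi : i = k
    · subst hi
      simp
    · simp [hi]
  rw [hammingDist, hammingDist, hsupp, card_erase_add_one (by simpa using hk)]

lemma hammingDist_le_hammingDist_update (z x : ι → α) {k : ι} {a : α} (ha : z k ≠ a) :
    hammingDist z x ≤ hammingDist z (update x k a) := by
  refine card_le_card fun i => ?_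
  by_cases hi : i = k
  · subst hi
    simp [ha]
  · simp [hi]

lemma card_hammingDist_eq_one [Fintype α] (x : ι → α) :
    #{y | hammingDist x y = 1} = Fintype.card ι * (Fintype.card α - 1) := by
  have hsphere : ({y | hammingDist x y = 1} : Finset (ι → α)) =
      (univ.sigma fun k => univ.erase (x k)).image fun p => update x p.1 p.2 := by
    ext y
    simp [hammingDist_eq_one_iff]
  rw [hsphere, card_image_of_injOn, card_sigma]
  · simp [card_erase_of_mem]
  · rintro ⟨k, a⟩ hka ⟨l, b⟩ hlb hupd
    replace hka : a ≠ x k := by simpa using hka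
    obtain rfl : k = l := by
      by_contra hkl
      exact hka (by simpa [hkl] using congrFun hupd k)
    simpa using congrFun hupd k

lemma filter_common_neighbours_of_hammingDist_eq_two [Fintype α] {x z : ι → α}
    (h : hammingDist x z = 2) :
    ({y | hammingDist x y = 1 ∧ hammingDist z y = 1} : Finset (ι → α)) =
      ({k | x k ≠ z k} : Finset ι).image fun k => update x k (z k) := by
  ext y
  simp only [mem_filter, Finset.mem_univ, true_and, Finset.mem_image]
  constructor
  · rintro ⟨hxy, hzy⟩
    obtain ⟨k, a, ha, rfl⟩ := hammingDist_eq_one_iff.1 hxy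
    obtain rfl : z k = a := by
      by_contra hza
      have := hammingDist_le_hammingDist_update z x hza
      rw [hammingDist_comm z x] at this
      omega
    exact ⟨k, Ne.symm ha, rfl⟩
  · rintro ⟨k, hk, rfl⟩
    have := hammingDist_update_add_one z x (Ne.symm hk)
    rw [hammingDist_comm z x] at this
    exact ⟨hammingDist_update_self x (Ne.symm hk), by omega⟩

lemma card_common_neighbours_of_hammingDist_eq_two [Fintype α] {x z : ι → α}
    (h : hammingDist x z = 2) :
    #{y | hammingDist x y = 1 ∧ hammingDist z y = 1} = 2 := by
  rw [filter_common_neighbours_of_hammingDist_eq_two h, card_image_of_injOn, ← h, hammingDist]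
  intro k hk l _ hkl
  by_contra hne
  have hk : x k ≠ z k := by simpa using hk
  exact hk (by simpa [hne] using (congrFun hkl k).symm)

end HammingGraph

section Codes

variable {ι α : Type*} [Fintype ι] [DecidableEq α] {C : Set (ι → α)}

lemma eq_of_hammingDist_eq_one_of_mem (hC : ∀ a ∈ C, ∀ b ∈ C, a ≠ b → 3 ≤ hammingDist a b)
    {β β' ν : ι → α} (hβ : β ∈ C) (hβ' : β' ∈ C) (h : hammingDist β ν = 1)
    (h' : hammingDist β' ν = 1) : β = β' := by
  by_contra hne
  have := hammingDist_triangle β ν β'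
  have := hC β hβ β' hβ' hne
  rw [hammingDist_comm ν β'] at *
  omega

lemma card_hammingDist_eq_one_eq_two_mul_card_codewords [DecidableEq ι] [Fintype α]
    [DecidablePred (· ∈ C)] (hC : ∀ a ∈ C, ∀ b ∈ C, a ≠ b → 3 ≤ hammingDist a b) {w : ι → α}
    (hfar : ∀ β ∈ C, 2 ≤ hammingDist w β)
    (hcov : ∀ ν, hammingDist w ν = 1 → ∃ β ∈ C, hammingDist β ν = 1) :
    #{ν | hammingDist w ν = 1} = 2 * #{β | β ∈ C ∧ hammingDist w β = 2} := by
  have hpartition : ({ν | hammingDist w ν = 1} : Finset (ι → α)) =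
      ({β | β ∈ C ∧ hammingDist w β = 2} : Finset (ι → α)).biUnion
        fun β => {ν | hammingDist w ν = 1 ∧ hammingDist β ν = 1} := by
    ext ν
    simp only [mem_filter, Finset.mem_univ, true_and, Finset.mem_biUnion]
    constructor
    · intro hν
      obtain ⟨β, hβ, hβν⟩ := hcov ν hν
      have := hammingDist_triangle w ν β
      have := hfar β hβ
      rw [hammingDist_comm ν β] at *
      exact ⟨β, ⟨hβ, by omega⟩, hν, hβν⟩
    · rintro ⟨β, -, hν, -⟩
      exact hν
  rw [hpartition, card_biUnion, sum_congr rfl fun β hβ =>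
    card_common_neighbours_of_hammingDist_eq_two (mem_filter.1 hβ).2.2, sum_const, smul_eq_mul,
    mul_comm]
  intro β hβ β' hβ' hne
  simp only [coe_filter, Finset.mem_univ, true_and, Set.mem_ofPred_eq] at hβ hβ'
  refine disjoint_left.2 fun ν hν hν' => hne ?_
  simp only [mem_filter, Finset.mem_univ, true_and] at hν hν'
  exact eq_of_hammingDist_eq_one_of_mem hC hβ.1 hβ'.1 hν.2 hν'.2

end Codes

section HammingAut

variable [DecidableEq Q] {C : Set (Fin m → Q)}

lemma mem_nbrs_of_hammingDist_eq_one (hC : ∀ a ∈ C, ∀ b ∈ C, a ≠ b → 3 ≤ hammingDist a b)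
    {α μ : Fin m → Q} (hα : α ∈ C) (h : hammingDist α μ = 1) : μ ∈ Nbrs C := by
  refine ⟨fun hμ => ?_, α, hα, by rwa [hammingDist_comm]⟩
  have hne : α ≠ μ := by
    rintro rfl
    simp at h
  have := hC α hα μ hμ hne
  omega

lemma two_le_hammingDist_of_notMem_nbrs {w β : Fin m → Q} (hw : w ∉ C) (hwN : w ∉ Nbrs C)
    (hβ : β ∈ C) : 2 ≤ hammingDist w β := by
  have h0 : hammingDist w β ≠ 0 := fun h => hw (eq_of_hammingDist_eq_zero h ▸ hβ)
  have h1 : hammingDist w β ≠ 1 := fun h => hwN ⟨hw, β, hβ, h⟩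
  omega

lemma apply_notMem_nbrs {y : (Fin m → Q) ≃ (Fin m → Q)} (hyN : y '' Nbrs C = Nbrs C)
    {α : Fin m → Q} (hα : α ∈ C) : y α ∉ Nbrs C := by
  rw [← hyN, y.injective.mem_set_image]
  exact fun h => h.1 hα

namespace IsHammingAut

variable {y : (Fin m → Q) ≃ (Fin m → Q)}

lemma mem_nbrs_of_hammingDist_apply_eq_one (hy : IsHammingAut y) (hyN : y '' Nbrs C = Nbrs C)
    (hC : ∀ a ∈ C, ∀ b ∈ C, a ≠ b → 3 ≤ hammingDist a b) {α ν : Fin m → Q} (hα : α ∈ C)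
    (h : hammingDist (y α) ν = 1) : ν ∈ Nbrs C := by
  rw [← hyN, ← y.apply_symm_apply ν]
  refine Set.mem_image_of_mem y (mem_nbrs_of_hammingDist_eq_one hC hα ?_)
  rwa [← hy, y.apply_symm_apply]

lemma pre_eq_image_symm (hy : IsHammingAut y) (α : Fin m → Q) :
    Pre C α y = y.symm '' {β | β ∈ C ∧ hammingDist (y α) β = 2} := by
  rw [y.symm.image_eq_preimage_symm, Equiv.symm_symm]
  ext π
  simp only [Pre, Set.mem_ofPred_eq, Set.mem_preimage, hy α π, and_comm]

end IsHammingAut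

end HammingAut

/-- `Pre(α,y)` has exactly `m(q-1)/2` elements; in particular
`m(q-1)` is even. -/
theorem stmt_6 [DecidableEq Q] [Fintype Q] (q : ℕ) (hq : Fintype.card Q = q)
    (C : Set (Fin m → Q)) (δ : ℕ)
    (hmin : IsMinDist C δ) (hδ : 3 ≤ δ)
    (α : Fin m → Q) (hα : α ∈ C)
    (y : (Fin m → Q) ≃ (Fin m → Q)) (hy : IsHammingAut y)
    (hyN : y '' Nbrs C = Nbrs C) (hyα : y α ∉ C) :
    (Pre C α y).ncard = m * (q - 1) / 2 ∧ Even (m * (q - 1)) := by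
  classical
  have hC : ∀ a ∈ C, ∀ b ∈ C, a ≠ b → 3 ≤ hammingDist a b :=
    fun a ha b hb hab => hδ.trans (hmin.1 a ha b hb hab)
  have hcount := card_hammingDist_eq_one_eq_two_mul_card_codewords hC
    (fun β hβ => two_le_hammingDist_of_notMem_nbrs hyα (apply_notMem_nbrs hyN hα) hβ)
    fun ν hν => by
      obtain ⟨-, β, hβ, hνβ⟩ := hy.mem_nbrs_of_hammingDist_apply_eq_one hyN hC hα hν
      exact ⟨β, hβ, by rwa [hammingDist_comm]⟩
  rw [card_hammingDist_eq_one, Fintype.card_fin, hq] at hcount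
  have hpre : (Pre C α y).ncard = #{β | β ∈ C ∧ hammingDist (y α) β = 2} := by
    rw [hy.pre_eq_image_symm, Set.ncard_image_of_injective _ y.symm.injective,
      Set.ncard_eq_toFinset_card', Set.toFinset_ofPred]
  exact ⟨by omega, even_iff_two_dvd.2 ⟨_, hcount⟩⟩
end

section
/- Let C be a code in H(m,q) with minimum distance δ ≥ 3, let α ∈ C, and let y be an automorphism of H(m,q) with y(Γ1(C)) = Γ1(C) and y(α) ∉ C. Then for every π ∈ Pre(α,y), every neighbour of π lies in Γ1(C); that is, {ν : d(π,ν) = 1} ⊆ Γ1(C). -/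
open Set

variable {m : ℕ} {Q : Type*}

/-- every neighbour of a pre-codeword lies in `Γ₁(C)`. -/
theorem stmt_7 [DecidableEq Q] (C : Set (Fin m → Q)) (δ : ℕ)
    (hmin : IsMinDist C δ) (hδ : 3 ≤ δ)
    (α : Fin m → Q) (hα : α ∈ C)
    (y : (Fin m → Q) ≃ (Fin m → Q)) (hy : IsHammingAut y)
    (hyN : y '' Nbrs C = Nbrs C) (hyα : y α ∉ C) :
    ∀ π ∈ Pre C α y, {ν : Fin m → Q | hammingDist π ν = 1} ⊆ Nbrs C := by
  rintro π ⟨hd2, hyπ⟩ ν (hν : hammingDist π ν = 1)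
  have hdy : hammingDist (y ν) (y π) = 1 := by
    rw [hy, hammingDist_comm, hν]
  have hνπ : ν ≠ π := by
    intro h; rw [h, hammingDist_self] at hν; omega
  have hyνC : y ν ∉ C := by
    intro hc
    have hne : y ν ≠ y π := fun h => hνπ (y.injective h)
    have := hmin.1 _ hc _ hyπ hne
    omega
  have : y ν ∈ Nbrs C := ⟨hyνC, y π, hyπ, hdy⟩
  rw [← hyN] at this
  obtain ⟨w, hw, hwν⟩ := this
  rwa [y.injective hwν] at hw
end

section
/- Let C be a code in H(m,q) with minimum distance δ ≥ 3, let α ∈ C, let y be an automorphism of H(m,q) with y(Γ1(C)) = Γ1(C) and y(α) ∉ C, and let π ∈ Pre(α,y). Then the collection {Γ1(β) ∩ Γ1(π) : β ∈ C(π)} is a partition of Γ1(π) = {ν : d(π,ν) = 1}, each cell has exactly 2 elements, and consequently C(π) has exactly m(q-1)/2 elements (in particular m(q-1) is even). -/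
open Set

variable {m : ℕ} {Q : Type*}

section Aux
variable [DecidableEq Q]

lemma hd_def (a b : Fin m → Q) :
    hammingDist a b = (Finset.univ.filter fun i => a i ≠ b i).card := rfl

lemma filt_update (π : Fin m → Q) (i : Fin m) (x : Q) (hx : x ≠ π i) :
    (Finset.univ.filter fun k => Function.update π i x k ≠ π k) = {i} := by
  ext k
  by_cases h : k = i <;> simp [Function.update, h, hx]

lemma hd_update (π : Fin m → Q) (i : Fin m) (x : Q) (hx : x ≠ π i) :
    hammingDist (Function.update π i x) π = 1 := by
  rw [hd_def, filt_update π i x hx]; simp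

lemma dist_one_iff {a b : Fin m → Q} :
    hammingDist b a = 1 ↔ ∃ i x, x ≠ a i ∧ b = Function.update a i x := by
  constructor
  · intro h
    rw [hd_def, Finset.card_eq_one] at h
    obtain ⟨i, hi⟩ := h
    have hmem : ∀ k, b k ≠ a k ↔ k = i := by
      intro k
      have := Finset.ext_iff.1 hi k
      simpa using this
    refine ⟨i, b i, (hmem i).2 rfl, ?_⟩
    funext k
    by_cases h : k = i
    · subst h; simp
    · have := (hmem k).not.2 h
      push_neg at this
      simp [Function.update, h, this]
  · rintro ⟨i, x, hx, rfl⟩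
    exact hd_update a i x hx

lemma dist_two_struct {β π : Fin m → Q} (h : hammingDist β π = 2) :
    ∃ i j, i ≠ j ∧ β i ≠ π i ∧ β j ≠ π j ∧ ∀ k, k ≠ i → k ≠ j → β k = π k := by
  rw [hd_def, Finset.card_eq_two] at h
  obtain ⟨i, j, hij, hs⟩ := h
  have hmem : ∀ k, β k ≠ π k ↔ (k = i ∨ k = j) := by
    intro k
    have := Finset.ext_iff.1 hs k
    simpa using this
  refine ⟨i, j, hij, (hmem i).2 (Or.inl rfl), (hmem j).2 (Or.inr rfl), ?_⟩
  intro k hki hkj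
  have := (hmem k).not.2 (by tauto)
  push_neg at this
  exact this


lemma cell_eq {β π : Fin m → Q} (h2 : hammingDist β π = 2) :
    ∃ u v : Fin m → Q, u ≠ v ∧ Sph β ∩ Sph π = {u, v} := by
  obtain ⟨i, j, hij, hbi, hbj, hout⟩ := dist_two_struct h2
  refine ⟨Function.update π i (β i), Function.update π j (β j), ?_, ?_⟩
  · intro h
    have := congrFun h i
    rw [Function.update_self, Function.update_of_ne hij] at this
    exact hbi this
  · ext ν
    simp only [Sph, Set.mem_inter_iff, Set.mem_setOf_eq, Set.mem_insert_iff,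
      Set.mem_singleton_iff]
    constructor
    · rintro ⟨hβν, hπν⟩
      rw [hammingDist_comm] at hπν
      obtain ⟨k, c, hc, rfl⟩ := dist_one_iff.1 hπν
      -- case on k
      by_cases hki : k = i
      · subst hki
        left
        -- show c = β k
        have hj : β j ≠ Function.update π k c j := by
          rw [Function.update_of_ne (Ne.symm hij)]; exact hbj
        rw [hd_def, Finset.card_eq_one] at hβν
        obtain ⟨t, ht⟩ := hβν
        have hjt : j = t := by
          have := Finset.ext_iff.1 ht j
          simpa using this.1 (by simpa using hj)
        have hkne : ¬ (β k ≠ Function.update π k c k) := by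
          have := Finset.ext_iff.1 ht k
          simp only [Finset.mem_filter, Finset.mem_univ, true_and,
            Finset.mem_singleton] at this
          intro hcon
          exact hij ((this.1 hcon).trans hjt.symm)
        push_neg at hkne
        rw [Function.update_self] at hkne
        rw [← hkne]
      · by_cases hkj : k = j
        · subst hkj
          right
          have hi' : β i ≠ Function.update π k c i := by
            rw [Function.update_of_ne hij]; exact hbi
          rw [hd_def, Finset.card_eq_one] at hβν
          obtain ⟨t, ht⟩ := hβν
          have hit : i = t := by
            have := Finset.ext_iff.1 ht i
            simpa using this.1 (by simpa using hi')
          have hkne : ¬ (β k ≠ Function.update π k c k) := by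
            have := Finset.ext_iff.1 ht k
            simp only [Finset.mem_filter, Finset.mem_univ, true_and,
              Finset.mem_singleton] at this
            intro hcon
            exact hij (hit.trans (this.1 hcon).symm)
          push_neg at hkne
          rw [Function.update_self] at hkne
          rw [← hkne]
        · -- contradiction: i, j, k all differ
          exfalso
          have hsub : ({i, j, k} : Finset (Fin m)) ⊆
              Finset.univ.filter fun t => β t ≠ Function.update π k c t := by
            intro t ht
            simp only [Finset.mem_insert, Finset.mem_singleton] at ht
            simp only [Finset.mem_filter, Finset.mem_univ, true_and]
            rcases ht with rfl | rfl | rfl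
            · rw [Function.update_of_ne (Ne.symm hki)]; exact hbi
            · rw [Function.update_of_ne (Ne.symm hkj)]; exact hbj
            · rw [Function.update_self, hout t hki hkj]; exact Ne.symm hc
          have h3 : ({i, j, k} : Finset (Fin m)).card = 3 := by
            rw [Finset.card_insert_of_notMem (by simp [hij, Ne.symm hki]),
              Finset.card_insert_of_notMem (by simp [Ne.symm hkj])]
            simp
          have := Finset.card_le_card hsub
          rw [h3, ← hd_def, hβν] at this
          omega
    · rintro (rfl | rfl)
      · constructor
        · -- hammingDist β (update π i (β i)) = 1 : filter = {j}
          rw [hd_def]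
          have : (Finset.univ.filter fun k => β k ≠ Function.update π i (β i) k)
              = {j} := by
            ext k
            by_cases hki : k = i
            · subst hki; simp [hij]
            · by_cases hkj : k = j
              · subst hkj
                simp [Function.update_of_ne hki, hbj, Ne.symm hij]
              · simp [Function.update_of_ne hki, hout k hki hkj, hkj]
          rw [this]; simp
        · rw [hammingDist_comm]; exact hd_update π i (β i) hbi
      · constructor
        · rw [hd_def]
          have : (Finset.univ.filter fun k => β k ≠ Function.update π j (β j) k)
              = {i} := by
            ext k
            by_cases hkj : k = j
            · subst hkj; simp [Ne.symm hij]
            · by_cases hki : k = i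
              · subst hki
                simp [Function.update_of_ne hkj, hbi, hij]
              · simp [Function.update_of_ne hkj, hout k hki hkj, hki]
          rw [this]; simp
        · rw [hammingDist_comm]; exact hd_update π j (β j) hbj

lemma sph_ncard [Fintype Q] (π : Fin m → Q) :
    (Sph π).ncard = m * (Fintype.card Q - 1) := by
  classical
  set F : Finset (Σ _ : Fin m, Q) :=
    Finset.univ.sigma (fun i => Finset.univ.filter (· ≠ π i)) with hF
  set f : (Σ _ : Fin m, Q) → (Fin m → Q) := fun p => Function.update π p.1 p.2
    with hf
  have hset : Sph π = ↑(F.image f) := by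
    ext ν
    simp only [Sph, mem_setOf_eq, Finset.coe_image, Set.mem_image,
      Finset.mem_coe, Finset.mem_sigma, Finset.mem_univ, Finset.mem_filter,
      true_and, hF, hf]
    constructor
    · intro h
      rw [hammingDist_comm] at h
      obtain ⟨i, x, hx, rfl⟩ := dist_one_iff.1 h
      exact ⟨⟨i, x⟩, hx, rfl⟩
    · rintro ⟨⟨i, x⟩, hx, rfl⟩
      rw [hammingDist_comm]
      exact hd_update π i x hx
  have hinj : Set.InjOn f ↑F := by
    rintro ⟨i, x⟩ hi ⟨j, z⟩ hj h
    simp only [Finset.coe_sigma, Finset.coe_filter, Set.mem_sigma_iff,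
      Finset.mem_coe, Finset.mem_univ, mem_setOf_eq, true_and, hF] at hi hj
    have hij : i = j := by
      by_contra hne
      have := congrFun h j
      rw [hf] at this
      simp only [Function.update_self, Function.update_of_ne (Ne.symm hne)] at this
      exact hj this.symm
    subst hij
    have := congrFun h i
    simp only [hf, Function.update_self] at this
    subst this
    rfl
  rw [hset, Set.ncard_coe_finset, Finset.card_image_of_injOn hinj, hF,
    Finset.card_sigma]
  have : ∀ i : Fin m, (Finset.univ.filter (· ≠ π i)).card = Fintype.card Q - 1 := by
    intro i
    rw [Finset.filter_ne', Finset.card_erase_of_mem (Finset.mem_univ _),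
      Finset.card_univ]
  simp [this, Finset.sum_const, mul_comm]

end Aux

/-- the sets `Γ₁(β) ∩ Γ₁(π)`, for `β ∈ C(π)`, partition `Γ₁(π)`
into cells of size 2; consequently `|C(π)| = m(q-1)/2` and `m(q-1)` is even. -/
theorem stmt_9 [DecidableEq Q] [Fintype Q] (q : ℕ) (hq : Fintype.card Q = q)
    (C : Set (Fin m → Q)) (δ : ℕ)
    (hmin : IsMinDist C δ) (hδ : 3 ≤ δ)
    (α : Fin m → Q) (hα : α ∈ C)
    (y : (Fin m → Q) ≃ (Fin m → Q)) (hy : IsHammingAut y)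
    (hyN : y '' Nbrs C = Nbrs C) (hyα : y α ∉ C)
    (π : Fin m → Q) (hπ : π ∈ Pre C α y) :
    (∀ β1 ∈ CSet C π, ∀ β2 ∈ CSet C π, β1 ≠ β2 →
        (Sph β1 ∩ Sph π) ∩ (Sph β2 ∩ Sph π) = ∅) ∧
    (∀ β ∈ CSet C π, (Sph β ∩ Sph π).ncard = 2) ∧
    (⋃ β ∈ CSet C π, Sph β ∩ Sph π) = Sph π ∧
    (CSet C π).ncard = m * (q - 1) / 2 ∧ Even (m * (q - 1)) := by
  classical
  obtain ⟨hαπ, hyπC⟩ := hπ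
  have hπC : π ∉ C := by
    intro h
    have hne : α ≠ π := by
      intro e; rw [e, hammingDist_self] at hαπ; omega
    have := hmin.1 α hα π h hne
    omega
  -- disjointness
  have hdisj : ∀ β1 ∈ CSet C π, ∀ β2 ∈ CSet C π, β1 ≠ β2 →
      (Sph β1 ∩ Sph π) ∩ (Sph β2 ∩ Sph π) = ∅ := by
    intro β1 hb1 β2 hb2 hne
    apply Set.eq_empty_iff_forall_notMem.2
    intro ν hν
    have h1 : hammingDist β1 ν = 1 := hν.1.1
    have h2 : hammingDist β2 ν = 1 := hν.2.1
    have ht := hammingDist_triangle β1 ν β2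
    rw [h1, hammingDist_comm ν β2, h2] at ht
    have := hmin.1 β1 hb1.1 β2 hb2.1 hne
    omega
  -- size 2
  have hsize : ∀ β ∈ CSet C π, (Sph β ∩ Sph π).ncard = 2 := by
    intro β hb
    obtain ⟨u, v, huv, he⟩ := cell_eq hb.2.1
    rw [he, Set.ncard_pair huv]
  -- cover
  have hcover : (⋃ β ∈ CSet C π, Sph β ∩ Sph π) = Sph π := by
    apply Set.Subset.antisymm
    · exact Set.iUnion₂_subset fun β hβ => Set.inter_subset_right
    · intro ν hν
      have hν' : hammingDist π ν = 1 := hν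
      have hyν : hammingDist (y π) (y ν) = 1 := by rw [hy]; exact hν'
      have hyνC : y ν ∉ C := by
        intro h
        have hne : y π ≠ y ν := by
          intro e; rw [e, hammingDist_self] at hyν; omega
        have := hmin.1 (y π) hyπC (y ν) h hne
        omega
      have hyνN : y ν ∈ Nbrs C :=
        ⟨hyνC, y π, hyπC, by rw [hammingDist_comm]; exact hyν⟩
      have hνN : ν ∈ Nbrs C := by
        rw [← hyN] at hyνN
        obtain ⟨w, hw, hwe⟩ := hyνN
        rwa [← y.injective hwe]
      obtain ⟨hνC, β, hβC, hνβ⟩ := hνN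
      have hβπ2 : hammingDist β π ≤ 2 := by
        have ht := hammingDist_triangle β ν π
        rw [hammingDist_comm β ν, hνβ, hammingDist_comm ν π, hν'] at ht
        omega
      have h0 : β ≠ π := fun e => hπC (e ▸ hβC)
      have h1 : hammingDist β π ≠ 1 := by
        intro h
        have hπN : π ∈ Nbrs C := ⟨hπC, β, hβC, by rw [hammingDist_comm]; exact h⟩
        have : y π ∈ Nbrs C := hyN ▸ Set.mem_image_of_mem y hπN
        exact this.1 hyπC
      have h0' : hammingDist β π ≠ 0 := hammingDist_ne_zero.2 h0
      have hβπ : hammingDist β π = 2 := by omega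
      have hβν : hammingDist β ν = 1 := by rw [hammingDist_comm]; exact hνβ
      have hνπ : hammingDist ν π = 1 := by rw [hammingDist_comm]; exact hν'
      have hβmem : β ∈ CSet C π := ⟨hβC, hβπ, ν, hβν, hνπ⟩
      exact Set.mem_biUnion hβmem ⟨hβν, hν'⟩
  refine ⟨hdisj, hsize, hcover, ?_⟩
  -- counting
  have hfinC : (CSet C π).Finite := Set.toFinite _
  have hGcard : ∀ β ∈ hfinC.toFinset,
      ((Sph β ∩ Sph π).toFinite.toFinset).card = 2 := by
    intro β hβ
    rw [Set.Finite.mem_toFinset] at hβ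
    rw [← Set.ncard_eq_toFinset_card _ (Sph β ∩ Sph π).toFinite]
    exact hsize β hβ
  have hdisjF : ∀ β1 ∈ hfinC.toFinset, ∀ β2 ∈ hfinC.toFinset, β1 ≠ β2 →
      Disjoint ((Sph β1 ∩ Sph π).toFinite.toFinset)
        ((Sph β2 ∩ Sph π).toFinite.toFinset) := by
    intro β1 h1 β2 h2 hne
    rw [Set.Finite.mem_toFinset] at h1 h2
    rw [Finset.disjoint_left]
    intro ν hν1 hν2
    rw [Set.Finite.mem_toFinset] at hν1 hν2
    have := hdisj β1 h1 β2 h2 hne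
    exact absurd (Set.mem_inter hν1 hν2) (by rw [this]; exact notMem_empty ν)
  have hbU : (Sph π).toFinite.toFinset
      = hfinC.toFinset.biUnion (fun β => (Sph β ∩ Sph π).toFinite.toFinset) := by
    ext ν
    rw [Set.Finite.mem_toFinset, Finset.mem_biUnion]
    constructor
    · intro h
      have h' : ν ∈ ⋃ β ∈ CSet C π, Sph β ∩ Sph π := hcover.symm ▸ h
      obtain ⟨β, hβ, hm⟩ := Set.mem_iUnion₂.1 h'
      exact ⟨β, hfinC.mem_toFinset.2 hβ, (Set.Finite.mem_toFinset _).2 hm⟩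
    · rintro ⟨β, hβ, hm⟩
      have : ν ∈ ⋃ β ∈ CSet C π, Sph β ∩ Sph π :=
        Set.mem_biUnion (hfinC.mem_toFinset.1 hβ) ((Set.Finite.mem_toFinset _).1 hm)
      exact hcover ▸ this
  have h2card : (Sph π).toFinite.toFinset.card = 2 * hfinC.toFinset.card := by
    rw [hbU, Finset.card_biUnion hdisjF, Finset.sum_congr rfl hGcard,
      Finset.sum_const, smul_eq_mul, mul_comm]
  have hSphcard : (Sph π).toFinite.toFinset.card = m * (q - 1) := by
    rw [← Set.ncard_eq_toFinset_card _ (Sph π).toFinite, sph_ncard, hq]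
  have hCcard : (CSet C π).ncard = hfinC.toFinset.card :=
    Set.ncard_eq_toFinset_card _ hfinC
  constructor
  · omega
  · exact ⟨(CSet C π).ncard, by omega⟩
end

section
/- Let C be a code in H(m,q) with minimum distance δ ≥ 3, let α ∈ C, let y be an automorphism of H(m,q) with y(Γ1(C)) = Γ1(C) and y(α) ∉ C, and let π ∈ Pre(α,y). Then y(β) ∉ C for every β ∈ C(π). -/
open Set

variable {m : ℕ} {Q : Type*}

/-- `y` moves every element of `C(π)` outside `C`. -/
theorem stmt_10 [DecidableEq Q] (C : Set (Fin m → Q)) (δ : ℕ)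
    (hmin : IsMinDist C δ) (hδ : 3 ≤ δ)
    (α : Fin m → Q) (hα : α ∈ C)
    (y : (Fin m → Q) ≃ (Fin m → Q)) (hy : IsHammingAut y)
    (hyN : y '' Nbrs C = Nbrs C) (hyα : y α ∉ C)
    (π : Fin m → Q) (hπ : π ∈ Pre C α y) :
    ∀ β ∈ CSet C π, y β ∉ C := by
  rintro β ⟨hβC, hβπ, -⟩ hyβ
  have hne : y β ≠ y π := by
    intro h
    have : β = π := y.injective h
    simp [this, hammingDist_self] at hβπ
  have h1 := hmin.1 _ hyβ _ hπ.2 hne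
  rw [hy β π, hβπ] at h1
  omega
end

section
/- Let n ≥ 2 and consider the binary Hamming graph H(2n,2) with vertices identified with pairs (β,γ) of vectors β,γ ∈ F_2^n, and let C = {(β,β) : β ∈ F_2^n, wt(β) even}. Then C is Aut(C)-neighbour transitive: for any two neighbours ν1, ν2 ∈ Γ1(C) there exists an automorphism f of H(2n,2) (a Hamming-distance-preserving bijection of F_2^{2n}) with f(C) = C and f(ν1) = ν2. -/
open Set

/-- Vectors in `F_2^n`. -/
abbrev V (n : ℕ) := Fin n → ZMod 2

/-- The Hamming distance on `H(2n,2)`, with vertices identified with pairs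
`(β,γ)` of vectors `β, γ ∈ F_2^n`. -/
def pd {n : ℕ} (u v : V n × V n) : ℕ :=
  hammingDist u.1 v.1 + hammingDist u.2 v.2

/-- The set of neighbours `Γ₁(S)` of a code `S` in `H(2n,2)`. -/
def NbrsP {n : ℕ} (S : Set (V n × V n)) : Set (V n × V n) :=
  {ν | ν ∉ S ∧ ∃ α ∈ S, pd ν α = 1}

/-- The code `S` has minimum distance `δ`. -/
def IsMinDistP {n : ℕ} (S : Set (V n × V n)) (δ : ℕ) : Prop :=
  (∀ a ∈ S, ∀ b ∈ S, a ≠ b → δ ≤ pd a b) ∧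
  ∃ a ∈ S, ∃ b ∈ S, a ≠ b ∧ pd a b = δ

/-- The repetition-style code `U = {(β,β) : β ∈ F_2^n}`. -/
def Ucode (n : ℕ) : Set (V n × V n) := {p | p.1 = p.2}

/-- The code `C = {(β,β) : β ∈ F_2^n, wt(β) even}`. -/
def Ccode (n : ℕ) : Set (V n × V n) := {p | p.1 = p.2 ∧ Even (hammingNorm p.1)}

/-!
Three kinds of automorphisms of `H(2n,2)` preserve `C`: translation by a codeword `(α,α)`, the
same coordinate permutation applied to both halves, and swapping the two halves. A neighbour of
`C` is `(α + eᵢ, α)` or `(α, α + eᵢ)` with `wt(α)` even; translating by `(α,α)`, and in the second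
case swapping the halves, moves it to `(eᵢ, 0)`, and a transposition of coordinates moves
`(eᵢ, 0)` to `(eⱼ, 0)`. So all neighbours lie in one `Aut(C)`-orbit.
-/

open MulAction

variable {n : ℕ}

lemma hammingDist_add_right {ι β : Type*} [Fintype ι] [DecidableEq β] [AddGroup β]
    (x y a : ι → β) : hammingDist (x + a) (y + a) = hammingDist x y :=
  hammingDist_comp (fun i b => b + a i) fun i => add_left_injective (a i)

lemma hammingDist_comp_equiv {ι κ β : Type*} [Fintype ι] [Fintype κ] [DecidableEq β]
    (σ : κ ≃ ι) (x y : ι → β) : hammingDist (x ∘ σ) (y ∘ σ) = hammingDist x y := by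
  simp only [hammingDist, Finset.card_filter]
  exact σ.sum_comp fun i => if x i ≠ y i then 1 else 0

lemma hammingNorm_comp_equiv {ι κ β : Type*} [Fintype ι] [Fintype κ] [DecidableEq β] [Zero β]
    (σ : κ ≃ ι) (x : ι → β) : hammingNorm (x ∘ σ) = hammingNorm x := by
  rw [← hammingDist_zero_right, ← hammingDist_zero_right, ← hammingDist_comp_equiv σ x 0]
  rfl

lemma even_hammingNorm_iff (x : V n) : Even (hammingNorm x) ↔ ∑ i, x i = 0 := by
  rw [← ZMod.natCast_eq_zero_iff_even, hammingNorm, Finset.card_filter]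
  push_cast
  congr! 2 with i
  generalize x i = a
  fin_cases a <;> rfl

lemma Even.hammingNorm_add {x y : V n} (hx : Even (hammingNorm x)) (hy : Even (hammingNorm y)) :
    Even (hammingNorm (x + y)) := by
  rw [even_hammingNorm_iff] at *
  simp only [Pi.add_apply, Finset.sum_add_distrib, hx, hy, add_zero]

lemma exists_eq_add_single_of_hammingDist_eq_one {x y : V n} (h : hammingDist x y = 1) :
    ∃ i, x = y + Pi.single i 1 := by
  rw [hammingDist_comm, hammingDist_eq_hammingNorm, hammingNorm, Finset.card_eq_one] at h
  obtain ⟨i, hi⟩ := h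
  have hsupp : ∀ j, -y j + x j ≠ 0 ↔ j = i := fun j => by simpa using Finset.ext_iff.1 hi j
  refine ⟨i, eq_add_of_neg_add_eq (funext fun j => ?_)⟩
  rcases eq_or_ne j i with rfl | hji
  · rw [Pi.single_eq_same]
    exact Fin.eq_one_of_ne_zero _ ((hsupp j).2 rfl)
  · rw [Pi.single_eq_of_ne hji]
    exact not_not.1 (mt (hsupp j).1 hji)

lemma exists_of_mem_nbrsP_Ccode {ν : V n × V n} (h : ν ∈ NbrsP (Ccode n)) :
    ∃ i, ∃ a : V n, Even (hammingNorm a) ∧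
      (ν = (a + Pi.single i 1, a) ∨ ν = (a, a + Pi.single i 1)) := by
  obtain ⟨-, ⟨a, b⟩, ⟨hab : a = b, ha⟩, hν⟩ := h
  subst hab
  rcases Nat.add_eq_one_iff.1 hν with ⟨h1, h2⟩ | ⟨h1, h2⟩
  · obtain ⟨i, hi⟩ := exists_eq_add_single_of_hammingDist_eq_one h2
    exact ⟨i, a, ha, Or.inr (Prod.ext (hammingDist_eq_zero.1 h1) hi)⟩
  · obtain ⟨i, hi⟩ := exists_eq_add_single_of_hammingDist_eq_one h1
    exact ⟨i, a, ha, Or.inl (Prod.ext hi (hammingDist_eq_zero.1 h2))⟩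

/-- The paper's `Aut(S)`. -/
def codeAut (S : Set (V n × V n)) : Subgroup (Equiv.Perm (V n × V n)) where
  carrier := {f | (∀ u v, pd (f u) (f v) = pd u v) ∧ f '' S = S}
  mul_mem' {f g} hf hg :=
    ⟨fun u v => by simp only [Equiv.Perm.coe_mul, Function.comp_apply, hf.1, hg.1],
      by rw [Equiv.Perm.coe_mul, image_comp, hg.2, hf.2]⟩
  one_mem' := ⟨fun _ _ => rfl, image_id S⟩
  inv_mem' {f} hf :=
    ⟨fun u v => by simpa using (hf.1 (f⁻¹ u) (f⁻¹ v)).symm,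
      (congrArg (f.symm '' ·) hf.2).symm.trans (f.symm_image_image S)⟩

lemma mem_codeAut {S : Set (V n × V n)} {f : Equiv.Perm (V n × V n)}
    (hf : ∀ u v, pd (f u) (f v) = pd u v) (hS : MapsTo f S S) : f ∈ codeAut S :=
  ⟨hf, ((S.toFinite.injOn_iff_bijOn_of_mapsTo hS).1 f.injective.injOn).image_eq⟩

lemma apply_mem_orbit_codeAut {S : Set (V n × V n)} {f : Equiv.Perm (V n × V n)}
    (hf : f ∈ codeAut S) (x : V n × V n) : f x ∈ orbit (codeAut S) x :=
  ⟨⟨f, hf⟩, rfl⟩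

lemma addRight_diag_mem_codeAut {a : V n} (ha : Even (hammingNorm a)) :
    Equiv.addRight ((a, a) : V n × V n) ∈ codeAut (Ccode n) := by
  refine mem_codeAut (fun u v => ?_) ?_
  · simp only [pd, Equiv.coe_addRight, Prod.fst_add, Prod.snd_add, hammingDist_add_right]
  · rintro ⟨x, y⟩ ⟨hxy : x = y, hx⟩
    subst hxy
    exact ⟨rfl, hx.hammingNorm_add ha⟩

def coordPerm (σ : Equiv.Perm (Fin n)) : Equiv.Perm (V n × V n) :=
  (σ.arrowCongr (Equiv.refl _)).prodCongr (σ.arrowCongr (Equiv.refl _))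

lemma coordPerm_apply (σ : Equiv.Perm (Fin n)) (u : V n × V n) :
    coordPerm σ u = (u.1 ∘ σ.symm, u.2 ∘ σ.symm) :=
  rfl

lemma coordPerm_mem_codeAut (σ : Equiv.Perm (Fin n)) : coordPerm σ ∈ codeAut (Ccode n) := by
  refine mem_codeAut (fun u v => ?_) ?_
  · simp only [pd, coordPerm_apply, hammingDist_comp_equiv]
  · rintro ⟨x, y⟩ ⟨hxy : x = y, hx⟩
    subst hxy
    exact ⟨rfl, (hammingNorm_comp_equiv σ.symm x).symm ▸ hx⟩

lemma prodComm_mem_codeAut : Equiv.prodComm (V n) (V n) ∈ codeAut (Ccode n) := by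
  refine mem_codeAut (fun u v => add_comm _ _) ?_
  rintro ⟨x, y⟩ ⟨hxy : x = y, hx⟩
  subst hxy
  exact ⟨rfl, hx⟩

lemma single_mem_orbit_single (i j : Fin n) :
    ((Pi.single j 1, 0) : V n × V n) ∈ orbit (codeAut (Ccode n)) (Pi.single i 1, 0) := by
  have hswap : coordPerm (Equiv.swap i j) (Pi.single i 1, 0) = (Pi.single j 1, 0) := by
    simp [coordPerm_apply, Pi.single_comp_equiv]
  exact hswap ▸ apply_mem_orbit_codeAut (coordPerm_mem_codeAut _) _

lemma mem_orbit_single_of_mem_nbrsP {ν : V n × V n} (h : ν ∈ NbrsP (Ccode n)) :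
    ∃ i, ν ∈ orbit (codeAut (Ccode n)) (Pi.single i 1, 0) := by
  obtain ⟨i, a, ha, rfl | rfl⟩ := exists_of_mem_nbrsP_Ccode h
  · have hν : Equiv.addRight (a, a) (Pi.single i 1, 0) = (a + Pi.single i 1, a) := by
      simp [add_comm]
    exact ⟨i, hν ▸ apply_mem_orbit_codeAut (addRight_diag_mem_codeAut ha) _⟩
  · have hν : (Equiv.addRight (a, a) * Equiv.prodComm (V n) (V n)) (Pi.single i 1, 0) =
        (a, a + Pi.single i 1) := by
      simp [add_comm]
    exact ⟨i, hν ▸ apply_mem_orbit_codeAut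
      (mul_mem (addRight_diag_mem_codeAut ha) prodComm_mem_codeAut) _⟩

theorem stmt_17_general (n : ℕ) :
    ∀ ν1 ∈ NbrsP (Ccode n), ∀ ν2 ∈ NbrsP (Ccode n),
      ∃ f : (V n × V n) ≃ (V n × V n),
        (∀ u v, pd (f u) (f v) = pd u v) ∧
        f '' Ccode n = Ccode n ∧
        f ν1 = ν2 := by
  intro ν1 h1 ν2 h2
  obtain ⟨i, hi⟩ := mem_orbit_single_of_mem_nbrsP h1
  obtain ⟨j, hj⟩ := mem_orbit_single_of_mem_nbrsP h2
  have horbit : ν2 ∈ orbit (codeAut (Ccode n)) ν1 := by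
    rw [orbit_eq_iff.2 hi, ← orbit_eq_iff.2 (single_mem_orbit_single i j)]
    exact hj
  obtain ⟨⟨f, hf_dist, hf_C⟩, rfl⟩ := horbit
  exact ⟨f, hf_dist, hf_C, rfl⟩

/-- `C` is `Aut(C)`-neighbour transitive: any two neighbours of
`C` are related by a distance-preserving bijection fixing `C` setwise. -/
theorem stmt_17 (n : ℕ) (hn : 2 ≤ n) :
    ∀ ν1 ∈ NbrsP (Ccode n), ∀ ν2 ∈ NbrsP (Ccode n),
      ∃ f : (V n × V n) ≃ (V n × V n),
        (∀ u v, pd (f u) (f v) = pd u v) ∧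
        f '' Ccode n = Ccode n ∧
        f ν1 = ν2 :=
  stmt_17_general n
end

section
/- For every even integer m ≥ 4 there exists a code C in the binary Hamming graph H(m,2) with minimum distance δ = 4 such that, letting X be the set of all automorphisms y of H(m,2) with y(Γ1(C)) = Γ1(C), the group X acts transitively on Γ1(C) (so C is X-neighbour transitive) but X does not fix C setwise: some y ∈ X satisfies y(C) ≠ C. -/
open Set

variable {m : ℕ} {Q : Type*}

set_option linter.unusedSectionVars false

section Infra
variable {ι κ Q : Type*} [Fintype ι] [Fintype κ] [DecidableEq Q]

lemma dist_comp (e : ι ≃ κ) (x y : κ → Q) :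
    hammingDist (x ∘ e) (y ∘ e) = hammingDist x y := by
  simp only [hammingDist, Function.comp]
  exact Finset.card_bij' (fun i _ => e i) (fun j _ => e.symm j) (by simp) (by simp)
    (by simp) (by simp)

lemma dist_sum (f g : ι ⊕ κ → Q) :
    hammingDist f g
      = hammingDist (f ∘ Sum.inl) (g ∘ Sum.inl) + hammingDist (f ∘ Sum.inr) (g ∘ Sum.inr) := by
  simp only [hammingDist, Function.comp]
  rw [← Fintype.card_subtype, ← Fintype.card_subtype, ← Fintype.card_subtype,
    Fintype.card_congr (Equiv.subtypeSum (p := fun i => f i ≠ g i)), Fintype.card_sum]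

lemma dist_addRight {G : Type*} [AddGroup G] [DecidableEq G]
    (t x y : ι → G) : hammingDist (x + t) (y + t) = hammingDist x y := by
  simp only [hammingDist]
  congr 1
  apply Finset.filter_congr
  intro i _
  simp [Pi.add_apply]

lemma equiv_image_eq {α : Type*} {e : α ≃ α} {D : Set α} (h : ∀ x, e x ∈ D ↔ x ∈ D) :
    e '' D = D := by
  ext x
  rw [Equiv.image_eq_preimage_symm]
  simpa using (h (e.symm x)).symm

end Infra

namespace Stmt19

variable {k : ℕ}

/-- split a vector of length `k+k` into two halves -/
def E (k : ℕ) : (Fin (k + k) → ZMod 2) ≃ (Fin k → ZMod 2) × (Fin k → ZMod 2) :=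
  (Equiv.arrowCongr finSumFinEquiv.symm (Equiv.refl _)).trans
    (Equiv.sumArrowEquivProdArrow _ _ _)

lemma distE (x y : Fin (k + k) → ZMod 2) :
    hammingDist x y
      = hammingDist (E k x).1 (E k y).1 + hammingDist (E k x).2 (E k y).2 := by
  have hx : x = (x ∘ ⇑finSumFinEquiv) ∘ ⇑finSumFinEquiv.symm := by
    funext i; simp
  have hy : y = (y ∘ ⇑finSumFinEquiv) ∘ ⇑finSumFinEquiv.symm := by
    funext i; simp
  conv_lhs => rw [hx, hy, dist_comp, dist_sum]
  rfl

def S (w : Fin k → ZMod 2) : ZMod 2 := ∑ i, w i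

lemma dist_one_iff {u v : Fin k → ZMod 2} (h : hammingDist u v = 1) :
    ∃ i, ∀ a : Fin k, u a ≠ v a ↔ a = i := by
  obtain ⟨i, hi⟩ := Finset.card_eq_one.1 h
  refine ⟨i, fun a => ?_⟩
  rw [← Finset.mem_singleton, ← hi, Finset.mem_filter]
  simp

lemma S_ne_of_dist_one {u v : Fin k → ZMod 2} (h : hammingDist u v = 1) : S u ≠ S v := by
  obtain ⟨i, hiff⟩ := dist_one_iff h
  intro hS
  have h1 : ∑ a, (u a - v a) = 0 := by
    rw [Finset.sum_sub_distrib]; simpa [S, sub_eq_zero] using hS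
  have h2 : ∑ a, (u a - v a) = u i - v i := by
    rw [← Finset.sum_filter_of_ne (p := fun a => u a ≠ v a)
      (fun x _ hx => sub_ne_zero.1 hx)]
    have : Finset.filter (fun a => u a ≠ v a) Finset.univ = {i} := by
      ext a; simp [hiff a]
    rw [this, Finset.sum_singleton]
  exact ((hiff i).2 rfl) (sub_eq_zero.1 (h2 ▸ h1))


/-- the doubled even-weight code -/
def Code (k : ℕ) : Set (Fin (k + k) → ZMod 2) :=
  {x | (E k x).1 = (E k x).2 ∧ S (E k x).1 = 0}

/-- candidate neighbour set -/
def D (k : ℕ) : Set (Fin (k + k) → ZMod 2) :=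
  {x | hammingDist (E k x).1 (E k x).2 = 1}

lemma zmod2_cases : ∀ a : ZMod 2, a = 0 ∨ a = 1 := by decide

lemma nbrs_code : Nbrs (Code k) = D k := by
  ext x
  constructor
  · rintro ⟨hxC, α, ⟨hα1, _⟩, hd⟩
    have := distE x α
    rw [hd, ← hα1] at this
    rcases Nat.add_eq_one_iff.1 this.symm with ⟨h0, h1⟩ | ⟨h0, h1⟩
    · have : (E k x).1 = (E k α).1 := hammingDist_eq_zero.1 h0
      show hammingDist _ _ = 1
      rw [this]
      rwa [hammingDist_comm]
    · have h2 : (E k x).2 = (E k α).1 := hammingDist_eq_zero.1 h1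
      show hammingDist _ _ = 1
      rwa [h2]
  · intro hx
    have hx' : hammingDist (E k x).1 (E k x).2 = 1 := hx
    have hxC : x ∉ Code k := by
      rintro ⟨h1, -⟩
      rw [h1, hammingDist_self] at hx'
      exact one_ne_zero hx'.symm
    have hS := S_ne_of_dist_one hx'
    by_cases h : S (E k x).1 = 0
    · refine ⟨hxC, (E k).symm ((E k x).1, (E k x).1), ⟨?_, ?_⟩, ?_⟩
      · rw [Equiv.apply_symm_apply]
      · rw [Equiv.apply_symm_apply]; exact h
      · rw [distE, Equiv.apply_symm_apply]
        simp [hammingDist_self, hammingDist_comm, hx']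
    · have hv : S (E k x).2 = 0 := by
        rcases zmod2_cases (S (E k x).2) with h2 | h2
        · exact h2
        · rcases zmod2_cases (S (E k x).1) with h1 | h1
          · exact absurd h1 h
          · exact absurd (h1.trans h2.symm) hS
      refine ⟨hxC, (E k).symm ((E k x).2, (E k x).2), ⟨?_, ?_⟩, ?_⟩
      · rw [Equiv.apply_symm_apply]
      · rw [Equiv.apply_symm_apply]; exact hv
      · rw [distE, Equiv.apply_symm_apply]
        simp [hammingDist_self, hammingDist_comm, hx']

/-- the diagonal automorphism built from `A` -/
def aut (A : (Fin k → ZMod 2) ≃ (Fin k → ZMod 2)) :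
    (Fin (k + k) → ZMod 2) ≃ (Fin (k + k) → ZMod 2) :=
  (E k).trans ((A.prodCongr A).trans (E k).symm)

lemma E_aut (A : (Fin k → ZMod 2) ≃ (Fin k → ZMod 2)) (x : Fin (k + k) → ZMod 2) :
    E k (aut A x) = (A (E k x).1, A (E k x).2) := by
  simp [aut, Equiv.prodCongr, Prod.map]

lemma aut_isAut {A : (Fin k → ZMod 2) ≃ (Fin k → ZMod 2)}
    (hA : ∀ u v, hammingDist (A u) (A v) = hammingDist u v) : IsHammingAut (aut A) := by
  intro a b
  rw [distE (aut A a), E_aut, E_aut, distE a b]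
  simp [hA]

lemma aut_image_D {A : (Fin k → ZMod 2) ≃ (Fin k → ZMod 2)}
    (hA : ∀ u v, hammingDist (A u) (A v) = hammingDist u v) : aut A '' D k = D k := by
  apply equiv_image_eq
  intro x
  show hammingDist (E k (aut A x)).1 (E k (aut A x)).2 = 1 ↔ _
  rw [E_aut]
  simp only [hA]
  exact Iff.rfl

def permAddAut (σ : Fin k ≃ Fin k) (t : Fin k → ZMod 2) :
    (Fin k → ZMod 2) ≃ (Fin k → ZMod 2) :=
  (Equiv.arrowCongr σ.symm (Equiv.refl _)).trans (Equiv.addRight t)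

lemma permAddAut_apply (σ : Fin k ≃ Fin k) (t p : Fin k → ZMod 2) :
    permAddAut σ t p = (fun x => p (σ x)) + t := rfl

lemma permAddAut_dist (σ : Fin k ≃ Fin k) (t p q : Fin k → ZMod 2) :
    hammingDist (permAddAut σ t p) (permAddAut σ t q) = hammingDist p q := by
  show hammingDist (p ∘ ⇑σ + t) (q ∘ ⇑σ + t) = _
  rw [dist_addRight, dist_comp]

lemma zmod2_ne : ∀ a b : ZMod 2, a ≠ b → a = b + 1 := by decide

end Stmt19



/-- for every even `m ≥ 4` there is a binary code `C` in
`H(m,2)` with minimum distance 4 which is neighbour transitive under the full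
setwise stabiliser `X` of `Γ₁(C)`, yet `X` does not fix `C` setwise. -/
theorem stmt_19 :
    ∀ m : ℕ, 4 ≤ m → Even m →
      ∃ C : Set (Fin m → ZMod 2),
        IsMinDist C 4 ∧
        (∀ ν1 ∈ Nbrs C, ∀ ν2 ∈ Nbrs C,
          ∃ y : (Fin m → ZMod 2) ≃ (Fin m → ZMod 2),
            IsHammingAut y ∧ y '' Nbrs C = Nbrs C ∧ y ν1 = ν2) ∧
        (∃ y : (Fin m → ZMod 2) ≃ (Fin m → ZMod 2),
          IsHammingAut y ∧ y '' Nbrs C = Nbrs C ∧ y '' C ≠ C) := by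
  intro m hm hEven
  obtain ⟨k, rfl⟩ := hEven
  have hk : 2 ≤ k := by omega
  classical
  set i0 : Fin k := ⟨0, by omega⟩ with hi0
  set i1 : Fin k := ⟨1, by omega⟩ with hi1
  have hne01 : i0 ≠ i1 := by
    intro h
    have := congrArg Fin.val h
    simp [hi0, hi1] at this
  refine ⟨Stmt19.Code k, ⟨?_, ?_⟩, ?_, ?_⟩
  · -- minimum distance lower bound
    rintro a ⟨ha1, ha2⟩ b ⟨hb1, hb2⟩ hab
    have hne : (Stmt19.E k a).1 ≠ (Stmt19.E k b).1 := by
      intro h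
      exact hab ((Stmt19.E k).injective (Prod.ext h (by rw [← ha1, ← hb1, h])))
    have h0 : hammingDist (Stmt19.E k a).1 (Stmt19.E k b).1 ≠ 0 :=
      hammingDist_ne_zero.2 hne
    have h1 : hammingDist (Stmt19.E k a).1 (Stmt19.E k b).1 ≠ 1 :=
      fun h => Stmt19.S_ne_of_dist_one h (ha2.trans hb2.symm)
    rw [Stmt19.distE, ← ha1, ← hb1]
    omega
  · -- minimum distance attained
    set w2 : Fin k → ZMod 2 := Pi.single i0 1 + Pi.single i1 1 with hw2
    have hw2i0 : w2 i0 = 1 := by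
      simp [hw2, Pi.single_eq_same, Pi.single_eq_of_ne hne01]
    have hSw2 : Stmt19.S w2 = 0 := by
      simp [Stmt19.S, hw2, Finset.sum_add_distrib, Finset.sum_pi_single']
      decide
    have hd2 : hammingDist (0 : Fin k → ZMod 2) w2 = 2 := by
      have hfil : Finset.filter (fun a : Fin k => (0 : Fin k → ZMod 2) a ≠ w2 a) Finset.univ
          = {i0, i1} := by
        ext a
        by_cases h0 : a = i0
        · simp [h0, hw2, Pi.single_eq_same, Pi.single_eq_of_ne hne01]
        · by_cases h1 : a = i1
          · simp [h1, hw2, Pi.single_eq_same, Pi.single_eq_of_ne (Ne.symm hne01), h0]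
          · simp [h0, h1, hw2, Pi.single_eq_of_ne h0, Pi.single_eq_of_ne h1]
      show (Finset.filter _ Finset.univ).card = 2
      rw [hfil, Finset.card_insert_of_notMem (by simp [hne01]), Finset.card_singleton]
    refine ⟨(Stmt19.E k).symm (0, 0), ⟨?_, ?_⟩, (Stmt19.E k).symm (w2, w2), ⟨?_, ?_⟩, ?_, ?_⟩
    · rw [Equiv.apply_symm_apply]
    · rw [Equiv.apply_symm_apply]
      simp [Stmt19.S]
    · rw [Equiv.apply_symm_apply]
    · rw [Equiv.apply_symm_apply]
      exact hSw2
    · intro h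
      have := (Stmt19.E k).symm.injective h
      have : (0 : Fin k → ZMod 2) = w2 := congrArg Prod.fst this
      have := congrFun this i0
      rw [hw2i0] at this
      exact one_ne_zero this.symm
    · rw [Stmt19.distE, Equiv.apply_symm_apply, Equiv.apply_symm_apply]
      simp [hd2]
  · -- neighbour transitivity
    rw [Stmt19.nbrs_code]
    intro nu1 h1 nu2 h2
    obtain ⟨i, hiI⟩ := Stmt19.dist_one_iff h1
    obtain ⟨j, hjI⟩ := Stmt19.dist_one_iff h2
    set sg := Equiv.swap i j with hsg
    set t : Fin k → ZMod 2 := (Stmt19.E k nu2).1 - (fun x => (Stmt19.E k nu1).1 (sg x)) with ht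
    set A := Stmt19.permAddAut sg t with hA
    refine ⟨Stmt19.aut A, Stmt19.aut_isAut (Stmt19.permAddAut_dist sg t), Stmt19.aut_image_D (Stmt19.permAddAut_dist sg t), ?_⟩
    apply (Stmt19.E k).injective
    rw [Stmt19.E_aut]
    have hAu : A (Stmt19.E k nu1).1 = (Stmt19.E k nu2).1 := by
      rw [hA, Stmt19.permAddAut_apply, ht]
      abel
    have hAv : A (Stmt19.E k nu1).2 = (Stmt19.E k nu2).2 := by
      rw [hA, Stmt19.permAddAut_apply, ht]
      funext x
      by_cases hx : x = j
      · subst hx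
        have hvi : (Stmt19.E k nu1).2 i = (Stmt19.E k nu1).1 i + 1 :=
          Stmt19.zmod2_ne _ _ (Ne.symm ((hiI i).2 rfl))
        have hvj : (Stmt19.E k nu2).2 x = (Stmt19.E k nu2).1 x + 1 :=
          Stmt19.zmod2_ne _ _ (Ne.symm ((hjI x).2 rfl))
        simp only [Pi.add_apply, Pi.sub_apply, Equiv.swap_apply_right, hsg]
        rw [hvi, hvj]
        abel
      · have hsx : sg x ≠ i := by
          intro h
          apply hx
          rw [← Equiv.swap_apply_self i j x, ← hsg, h, hsg, Equiv.swap_apply_left]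
        have hvu : (Stmt19.E k nu1).2 (sg x) = (Stmt19.E k nu1).1 (sg x) := by
          by_contra hne
          exact hsx ((hiI (sg x)).1 (Ne.symm hne))
        have hvu' : (Stmt19.E k nu2).1 x = (Stmt19.E k nu2).2 x :=
          not_not.1 (fun hne => hx ((hjI x).1 hne))
        simp only [Pi.add_apply, Pi.sub_apply]
        rw [hvu, ← hvu']
        abel
    rw [hAu, hAv]
  · -- the stabiliser moves the code
    set e0 : Fin k → ZMod 2 := Pi.single i0 1 with he0
    set A := Stmt19.permAddAut (Equiv.refl (Fin k)) e0 with hA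
    refine ⟨Stmt19.aut A, Stmt19.aut_isAut (Stmt19.permAddAut_dist _ e0), ?_, ?_⟩
    · rw [Stmt19.nbrs_code]
      exact Stmt19.aut_image_D (Stmt19.permAddAut_dist _ e0)
    · intro heq
      have h0C : (Stmt19.E k).symm (0, 0) ∈ Stmt19.Code k := by
        constructor
        · rw [Equiv.apply_symm_apply]
        · rw [Equiv.apply_symm_apply]
          simp [Stmt19.S]
      have hmem : Stmt19.aut A ((Stmt19.E k).symm (0, 0)) ∈ Stmt19.Code k := by
        rw [← heq]
        exact Set.mem_image_of_mem _ h0C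
      have hS1 : Stmt19.S (Stmt19.E k (Stmt19.aut A ((Stmt19.E k).symm (0, 0)))).1 = 0 :=
        hmem.2
      rw [Stmt19.E_aut, Equiv.apply_symm_apply] at hS1
      have hA0 : A (0 : Fin k → ZMod 2) = e0 := by
        rw [hA, Stmt19.permAddAut_apply]
        funext x
        simp
      rw [hA0] at hS1
      have : Stmt19.S e0 = 1 := by
        simp [Stmt19.S, he0, Finset.sum_pi_single']
      rw [this] at hS1
      exact one_ne_zero hS1
end
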